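/- arXiv:2406.01242 — 2 statements merged into one kernel-verified Lean document; each statement's English description precedes it below -/
import Mathlib

section
/- Let (X_n^{(b)})_{b ≥ 1, n ≥ 1} be real random variables such that for each n the pairs (X_n^{(b_1)}, X_n^{(b_2)}) for b_1 ≠ b_2 are identically distributed, and suppose (X_n^{(1)}, X_n^{(2)}) converges in distribution as n → ∞ to (X^{(1)}, X^{(2)}) where X^{(1)}, X^{(2)} are independent with common continuous distribution function F. Let B(n) → ∞ and let F_n(t) = B(n)^{-1} Σ_{b=1}^{B(n)} 1{X_n^{(b)} ≤ t} be the empirical distribution function. Then E[ |F_n(t) − F(t)|^2 ] → 0 as n → ∞ for every t ∈ R; in particular F_n(t) → F(t) in probability. -/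
/-!
With `q_n = P(X_n^{(b)} ≤ t)` and `p_n = P(X_n^{(b)} ≤ t, X_n^{(b')} ≤ t)` for `b ≠ b'`, which by
exchangeability do not depend on `b, b'`, expanding the square as a double sum over pairs gives
`E[(F_n(t) - F(t))²] = B(n)⁻¹ (q_n - p_n) + p_n - 2 F(t) q_n + F(t)²`, the diagonal being the
`O(1/B(n))` term. Since `q_n → F(t)` and `p_n → F(t)²`, this tends to `F(t)² - 2 F(t)² + F(t)² = 0`,
and Chebyshev's inequality turns the `L²` convergence into convergence in probability.
-/

open MeasureTheory ProbabilityTheory Filter Finset Topology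

theorem sq_sum_indicator_one {Ω ι : Type*} (s : Finset ι) (A : ι → Set Ω) (ω : Ω) :
    (∑ i ∈ s, (A i).indicator (1 : Ω → ℝ) ω) ^ 2
      = ∑ i ∈ s, ∑ j ∈ s, (A i ∩ A j).indicator 1 ω := by
  simp only [sq, sum_mul_sum, Set.inter_indicator_one, Pi.mul_apply]

section ExchangeableEvents

variable {Ω ι : Type*} [MeasurableSpace Ω] {μ : Measure Ω} {A : ι → Set Ω} {s : Finset ι}

theorem integrable_sum_indicator_one [IsFiniteMeasure μ] (hA : ∀ i ∈ s, MeasurableSet (A i)) :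
    Integrable (fun ω => ∑ i ∈ s, (A i).indicator (1 : Ω → ℝ) ω) μ :=
  integrable_finsetSum _ fun i hi => (integrable_const 1).indicator (hA i hi)

theorem integrable_sq_sum_indicator_one [IsFiniteMeasure μ] (hA : ∀ i ∈ s, MeasurableSet (A i)) :
    Integrable (fun ω => (∑ i ∈ s, (A i).indicator (1 : Ω → ℝ) ω) ^ 2) μ := by
  simp only [sq_sum_indicator_one]
  exact integrable_finsetSum _ fun i hi => integrable_sum_indicator_one
    fun j hj => (hA i hi).inter (hA j hj)

theorem integral_sum_indicator_one [IsFiniteMeasure μ] (hA : ∀ i ∈ s, MeasurableSet (A i)) :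
    ∫ ω, ∑ i ∈ s, (A i).indicator (1 : Ω → ℝ) ω ∂μ = ∑ i ∈ s, μ.real (A i) := by
  rw [integral_finsetSum _ fun i hi => (integrable_const 1).indicator (hA i hi)]
  exact sum_congr rfl fun i hi => integral_indicator_one (hA i hi)

theorem integral_sq_sum_indicator_one [IsFiniteMeasure μ] (hA : ∀ i ∈ s, MeasurableSet (A i)) :
    ∫ ω, (∑ i ∈ s, (A i).indicator (1 : Ω → ℝ) ω) ^ 2 ∂μ
      = ∑ i ∈ s, ∑ j ∈ s, μ.real (A i ∩ A j) := by
  simp only [sq_sum_indicator_one]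
  rw [integral_finsetSum _ fun i hi => integrable_sum_indicator_one
    fun j hj => (hA i hi).inter (hA j hj)]
  exact sum_congr rfl fun i hi => integral_sum_indicator_one fun j hj => (hA i hi).inter (hA j hj)

theorem sum_sum_eq_of_diag_of_offDiag {f : ι → ι → ℝ} {q p : ℝ}
    (hdiag : ∀ i ∈ s, f i i = q) (hoff : ∀ i ∈ s, ∀ j ∈ s, i ≠ j → f i j = p) :
    ∑ i ∈ s, ∑ j ∈ s, f i j = #s * (q - p) + #s ^ 2 * p := by
  classical
  have hsplit : ∀ i ∈ s, ∀ j ∈ s, f i j = (if i = j then q - p else 0) + p := by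
    intro i hi j hj
    by_cases hij : i = j
    · subst hij; simp [hdiag i hi]
    · simp [hij, hoff i hi j hj hij]
  rw [sum_congr rfl fun i hi => sum_congr rfl (hsplit i hi)]
  simp only [sum_add_distrib, sum_ite_eq, sum_const, nsmul_eq_mul]
  rw [sum_congr rfl fun i hi => if_pos hi, sum_const, nsmul_eq_mul]
  ring

theorem integrable_sq_empirical_sub [IsFiniteMeasure μ] (hA : ∀ i ∈ s, MeasurableSet (A i))
    (c : ℝ) : Integrable (fun ω => ((#s : ℝ)⁻¹ * ∑ i ∈ s, (A i).indicator 1 ω - c) ^ 2) μ := by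
  refine ((((integrable_sq_sum_indicator_one hA).const_mul ((#s : ℝ)⁻¹ ^ 2)).sub
    ((integrable_sum_indicator_one hA).const_mul (2 * c * (#s : ℝ)⁻¹))).add
      (integrable_const (c ^ 2))).congr (ae_of_all _ fun ω => ?_)
  simp only [Pi.add_apply, Pi.sub_apply]
  ring

theorem integral_sq_empirical_sub_of_exchangeable [IsProbabilityMeasure μ] (hs : s.Nonempty)
    (hA : ∀ i ∈ s, MeasurableSet (A i)) {q p : ℝ} (hq : ∀ i ∈ s, μ.real (A i) = q)
    (hp : ∀ i ∈ s, ∀ j ∈ s, i ≠ j → μ.real (A i ∩ A j) = p) (c : ℝ) :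
    ∫ ω, ((#s : ℝ)⁻¹ * ∑ i ∈ s, (A i).indicator 1 ω - c) ^ 2 ∂μ
      = (#s : ℝ)⁻¹ * (q - p) + p - 2 * c * q + c ^ 2 := by
  have hS := integrable_sum_indicator_one (μ := μ) hA
  have hS2 := integrable_sq_sum_indicator_one (μ := μ) hA
  have hexpand : ∀ ω, ((#s : ℝ)⁻¹ * ∑ i ∈ s, (A i).indicator 1 ω - c) ^ 2
      = (#s : ℝ)⁻¹ ^ 2 * (∑ i ∈ s, (A i).indicator 1 ω) ^ 2
        - 2 * c * (#s : ℝ)⁻¹ * ∑ i ∈ s, (A i).indicator 1 ω + c ^ 2 := fun ω => by ring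
  have hdiag : ∀ i ∈ s, μ.real (A i ∩ A i) = q := fun i hi => by rw [Set.inter_self, hq i hi]
  have hcard : (#s : ℝ) ≠ 0 := by exact_mod_cast hs.card_pos.ne'
  have hS2' := hS2.const_mul ((#s : ℝ)⁻¹ ^ 2)
  have hS' := hS.const_mul (2 * c * (#s : ℝ)⁻¹)
  simp only [hexpand]
  rw [integral_add ?_ (integrable_const _), integral_sub hS2' hS',
    integral_const_mul, integral_const_mul,
    integral_sq_sum_indicator_one hA, integral_sum_indicator_one hA,
    sum_sum_eq_of_diag_of_offDiag hdiag hp, sum_congr rfl hq, sum_const, nsmul_eq_mul,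
    integral_const, probReal_univ, one_smul]
  · field_simp
  · exact hS2'.sub hS'

end ExchangeableEvents

theorem tendsto_measure_le_abs_of_tendsto_integral_sq {Ω ι : Type*} [MeasurableSpace Ω]
    {μ : Measure Ω} [IsFiniteMeasure μ] {l : Filter ι} {g : ι → Ω → ℝ}
    (hg : ∀ i, Integrable (fun ω => g i ω ^ 2) μ)
    (hlim : Tendsto (fun i => ∫ ω, g i ω ^ 2 ∂μ) l (𝓝 0)) {ε : ℝ} (hε : 0 < ε) :
    Tendsto (fun i => μ {ω | ε ≤ |g i ω|}) l (𝓝 0) := by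
  have hset : ∀ i, {ω | ε ≤ |g i ω|} = {ω | ε ^ 2 ≤ g i ω ^ 2} := fun i => by
    ext ω
    simp only [Set.mem_ofPred_eq, ← sq_abs (g i ω), pow_le_pow_iff_left₀ hε.le (abs_nonneg _)
      two_ne_zero]
  have hmarkov : ∀ i, μ.real {ω | ε ≤ |g i ω|} ≤ (∫ ω, g i ω ^ 2 ∂μ) / ε ^ 2 := fun i => by
    rw [hset, le_div_iff₀ (by positivity), mul_comm]
    exact mul_meas_ge_le_integral_of_nonneg (ae_of_all _ fun ω => sq_nonneg _) (hg i) _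
  have hreal : Tendsto (fun i => μ.real {ω | ε ≤ |g i ω|}) l (𝓝 0) := by
    refine tendsto_of_tendsto_of_tendsto_of_le_of_le tendsto_const_nhds ?_
      (fun i => measureReal_nonneg) hmarkov
    simpa using hlim.div_const (ε ^ 2)
  exact (ENNReal.tendsto_toReal_iff (fun i => measure_ne_top μ _) ENNReal.zero_ne_top).mp hreal

theorem tendsto_inv_mul_sub_add_sub_add_sq {ι : Type*} {l : Filter ι} {N : ι → ℕ}
    (hN : Tendsto N l atTop) {q p : ι → ℝ} {c : ℝ} (hq : Tendsto q l (𝓝 c))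
    (hp : Tendsto p l (𝓝 (c * c))) :
    Tendsto (fun i => (N i : ℝ)⁻¹ * (q i - p i) + p i - 2 * c * q i + c ^ 2) l (𝓝 0) := by
  have hNinv := tendsto_inv_atTop_zero.comp ((tendsto_natCast_atTop_atTop (R := ℝ)).comp hN)
  have h := (((hNinv.mul (hq.sub hp)).add hp).sub (hq.const_mul (2 * c))).add_const (c ^ 2)
  rwa [show 0 * (c - c * c) + c * c - 2 * c * c + c ^ 2 = 0 by ring] at h

theorem ProbabilityTheory.IdentDistrib.measure_le_and_le {Ω Ω' : Type*} [MeasurableSpace Ω]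
    [MeasurableSpace Ω'] {μ : Measure Ω} {ν : Measure Ω'} {X Y : Ω → ℝ} {X' Y' : Ω' → ℝ}
    (h : IdentDistrib (fun ω => (X ω, Y ω)) (fun ω => (X' ω, Y' ω)) μ ν) (s t : ℝ) :
    μ {ω | X ω ≤ s ∧ Y ω ≤ t} = ν {ω | X' ω ≤ s ∧ Y' ω ≤ t} :=
  h.measure_mem_eq (measurableSet_Iic.prod measurableSet_Iic)

theorem bootstrap_edf_L2_convergence_general
    {Ω : Type*} [MeasurableSpace Ω] (μ : Measure Ω) [IsProbabilityMeasure μ]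
    (X : ℕ → ℕ → Ω → ℝ) (hmeas : ∀ n b, Measurable (X n b))
    (hexch : ∀ n b₁ b₂ b₁' b₂', b₁ ≠ b₂ → b₁' ≠ b₂' →
      IdentDistrib (fun ω => (X n b₁ ω, X n b₂ ω)) (fun ω => (X n b₁' ω, X n b₂' ω)) μ μ)
    (F : ℝ → ℝ)
    (hjoint : ∀ s t : ℝ,
      Tendsto (fun n => (μ {ω | X n 1 ω ≤ s ∧ X n 2 ω ≤ t}).toReal) atTop (nhds (F s * F t)))
    (hmarg : ∀ t : ℝ,
      Tendsto (fun n => (μ {ω | X n 1 ω ≤ t}).toReal) atTop (nhds (F t)))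
    (B : ℕ → ℕ) (hB : Tendsto B atTop atTop) :
    ∀ t : ℝ,
      Tendsto (fun n => ∫ ω,
          |(B n : ℝ)⁻¹ * (∑ b ∈ Finset.Icc 1 (B n), if X n b ω ≤ t then (1 : ℝ) else 0)
            - F t| ^ 2 ∂μ) atTop (nhds 0) ∧
      (∀ ε : ℝ, 0 < ε →
        Tendsto (fun n => μ {ω | ε ≤
            |(B n : ℝ)⁻¹ * (∑ b ∈ Finset.Icc 1 (B n), if X n b ω ≤ t then (1 : ℝ) else 0)
              - F t|}) atTop (nhds 0)) := by
  intro t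
  set q : ℕ → ℝ := fun n => μ.real {ω | X n 1 ω ≤ t}
  set p : ℕ → ℝ := fun n => μ.real {ω | X n 1 ω ≤ t ∧ X n 2 ω ≤ t}
  have hq : ∀ n b, μ.real {ω | X n b ω ≤ t} = q n := fun n b => congrArg ENNReal.toReal <|
    ((hexch n b (b + 1) 1 2 (by omega) (by omega)).comp measurable_fst).measure_mem_eq
      measurableSet_Iic
  have hp : ∀ n b b', b ≠ b' → μ.real ({ω | X n b ω ≤ t} ∩ {ω | X n b' ω ≤ t}) = p n :=
    fun n b b' hb => congrArg ENNReal.toReal <|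
      (hexch n b b' 1 2 hb (by omega)).measure_le_and_le t t
  have hA : ∀ n b, MeasurableSet {ω | X n b ω ≤ t} :=
    fun n b => measurableSet_le (hmeas n b) measurable_const
  have hcard : ∀ n, (#(Icc 1 (B n)) : ℝ) = B n := by simp
  set g : ℕ → Ω → ℝ :=
    fun n ω => (B n : ℝ)⁻¹ * ∑ b ∈ Icc 1 (B n), {ω | X n b ω ≤ t}.indicator 1 ω - F t with hg
  have hint : ∀ n, Integrable (fun ω => g n ω ^ 2) μ := fun n => by
    simpa only [hg, hcard] using
      integrable_sq_empirical_sub (μ := μ) (s := Icc 1 (B n)) (fun b _ => hA n b) (F t)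
  have hsecond : ∀ n, 1 ≤ B n →
      ∫ ω, g n ω ^ 2 ∂μ = (B n : ℝ)⁻¹ * (q n - p n) + p n - 2 * F t * q n + F t ^ 2 :=
    fun n hn => by
      simpa only [hg, hcard] using integral_sq_empirical_sub_of_exchangeable (nonempty_Icc.2 hn)
        (fun b _ => hA n b) (fun b _ => hq n b) (fun b _ b' _ => hp n b b') (F t)
  have hL2 : Tendsto (fun n => ∫ ω, g n ω ^ 2 ∂μ) atTop (𝓝 0) :=
    (tendsto_inv_mul_sub_add_sub_add_sq hB (hmarg t) (hjoint t t)).congr' <| by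
      filter_upwards [hB.eventually_ge_atTop 1] with n hn using (hsecond n hn).symm
  have hind : ∀ n b ω, (if X n b ω ≤ t then (1 : ℝ) else 0) = {ω | X n b ω ≤ t}.indicator 1 ω :=
    fun n b ω => by simp [Set.indicator_apply]
  simp only [hind, sq_abs]
  exact ⟨hL2, fun ε hε => tendsto_measure_le_abs_of_tendsto_integral_sq hint hL2 hε⟩

/-- L² convergence of the bootstrap empirical distribution function: if for
each `n` the pairs `(X_n^{(b₁)}, X_n^{(b₂)})`, `b₁ ≠ b₂`, are identically distributed and
`(X_n^{(1)}, X_n^{(2)})` converges in distribution to an independent pair with common continuous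
distribution function `F`, then for `B(n) → ∞` the empirical distribution function
`F_n(t) = B(n)⁻¹ ∑_{b=1}^{B(n)} 1{X_n^{(b)} ≤ t}` satisfies
`𝔼[|F_n(t) − F(t)|²] → 0` for every `t`; in particular `F_n(t) → F(t)` in probability. -/
theorem bootstrap_edf_L2_convergence
    {Ω : Type*} [MeasurableSpace Ω] (μ : Measure Ω) [IsProbabilityMeasure μ]
    (X : ℕ → ℕ → Ω → ℝ) (hmeas : ∀ n b, Measurable (X n b))
    (hexch : ∀ n b₁ b₂ b₁' b₂', b₁ ≠ b₂ → b₁' ≠ b₂' →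
      IdentDistrib (fun ω => (X n b₁ ω, X n b₂ ω)) (fun ω => (X n b₁' ω, X n b₂' ω)) μ μ)
    (F : ℝ → ℝ) (hF : Continuous F)
    (hjoint : ∀ s t : ℝ,
      Tendsto (fun n => (μ {ω | X n 1 ω ≤ s ∧ X n 2 ω ≤ t}).toReal) atTop (nhds (F s * F t)))
    (hmarg : ∀ t : ℝ,
      Tendsto (fun n => (μ {ω | X n 1 ω ≤ t}).toReal) atTop (nhds (F t)))
    (B : ℕ → ℕ) (hB : Tendsto B atTop atTop) :
    ∀ t : ℝ,
      Tendsto (fun n => ∫ ω,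
          |(B n : ℝ)⁻¹ * (∑ b ∈ Finset.Icc 1 (B n), if X n b ω ≤ t then (1 : ℝ) else 0)
            - F t| ^ 2 ∂μ) atTop (nhds 0) ∧
      (∀ ε : ℝ, 0 < ε →
        Tendsto (fun n => μ {ω | ε ≤
            |(B n : ℝ)⁻¹ * (∑ b ∈ Finset.Icc 1 (B n), if X n b ω ≤ t then (1 : ℝ) else 0)
              - F t|}) atTop (nhds 0)) :=
  bootstrap_edf_L2_convergence_general μ X hmeas hexch F hjoint hmarg B hB
end

section
/- Let F: R^R → [0,1] be a multivariate distribution function and F_n: R^R → [0,1] random distribution functions such that F_n(t) → F(t) in probability as n → ∞ for every t ∈ R^R, where F is continuous. Then sup_{t ∈ R^R} |F_n(t) − F(t)| → 0 in probability as n → ∞. -/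
/-!
Pólya's argument, made uniform over the approximating measures. Given `δ > 0`, choose `M` so that
`F (M, …, M) ≥ 1 - δ` and `F ≤ δ` at the corners with one coordinate `-M`. By continuity and
compactness the cube `[-M, M]^R` is covered by finitely many order intervals `[l, v]` with
`F v - F l < δ`. Since every distribution function is monotone, a probability measure whose
distribution function `G` is `δ`-close to `F` on these finitely many brackets and corners satisfies
`|G - F| ≤ 4δ` everywhere. So `{sup_t |F_n t - F t| ≥ ε}` lies in a finite union of the events
`{|F_n s - F s| ≥ ε / 8}`, whose probabilities tend to `0`.
-/

open MeasureTheory Filter Topology Set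

noncomputable def piCdf {ι : Type*} (P : Measure (ι → ℝ)) (t : ι → ℝ) : ℝ := P.real (Iic t)

lemma abs_sub_le_of_monotone_of_bracket {α : Type*} [Preorder α] {F G : α → ℝ}
    (hF : Monotone F) (hG : Monotone G) {l u v : α} (hlu : l ≤ u) (huv : u ≤ v) {δ η : ℝ}
    (hl : |G l - F l| ≤ η) (hv : |G v - F v| ≤ η) (hlv : F v - F l ≤ δ) :
    |G u - F u| ≤ δ + η := by
  have := hF hlu; have := hF huv; have := hG hlu; have := hG huv
  rw [abs_le] at *
  constructor <;> linarith

lemma IsCompact.exists_finset_bracketing {ι : Type*} [Finite ι] {F : (ι → ℝ) → ℝ}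
    (hF : Continuous F) {K : Set (ι → ℝ)} (hK : IsCompact K) {δ : ℝ} (hδ : 0 < δ) :
    ∃ S : Finset (ι → ℝ), ∀ u ∈ K, ∃ l ∈ S, ∃ v ∈ S, l ≤ u ∧ u ≤ v ∧ F v - F l < δ := by
  classical
  have hr : ∀ x, ∃ r > 0, F (x + fun _ => r) - F (x - fun _ => r) < δ := by
    intro x
    have hlim : Tendsto (fun r : ℝ => F (x + fun _ => r) - F (x - fun _ => r)) (𝓝[>] 0)
        (𝓝 0) := by
      have hc : Continuous fun r : ℝ => F (x + fun _ => r) - F (x - fun _ => r) := by fun_prop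
      exact (hc.tendsto' 0 0 (show F (x + 0) - F (x - 0) = 0 by simp)).mono_left
        nhdsWithin_le_nhds
    obtain ⟨r, hr, hr_pos⟩ := ((hlim.eventually (gt_mem_nhds hδ)).and self_mem_nhdsWithin).exists
    exact ⟨r, hr_pos, hr⟩
  choose r hr_pos hr using hr
  obtain ⟨C, -, hC⟩ := hK.elim_nhds_subcover (fun x => Icc (x - fun _ => r x) (x + fun _ => r x))
    fun x _ => pi_Icc_mem_nhds (fun _ => by simp [hr_pos x]) (fun _ => by simp [hr_pos x])
  refine ⟨C.image (fun x => x - fun _ => r x) ∪ C.image (fun x => x + fun _ => r x),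
    fun u hu => ?_⟩
  obtain ⟨x, hxC, hux⟩ := mem_iUnion₂.1 (hC hu)
  exact ⟨_, Finset.mem_union_left _ (Finset.mem_image_of_mem _ hxC),
    _, Finset.mem_union_right _ (Finset.mem_image_of_mem _ hxC), hux.1, hux.2, hr x⟩

lemma tendsto_measure_zero_of_subset_biUnion {Ω ι α : Type*} [MeasurableSpace Ω]
    {μ : Measure Ω} {l : Filter α} (S : Finset ι) {A : α → Set Ω} {B : ι → α → Set Ω}
    (hAB : ∀ n, A n ⊆ ⋃ s ∈ S, B s n) (hB : ∀ s ∈ S, Tendsto (fun n => μ (B s n)) l (𝓝 0)) :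
    Tendsto (fun n => μ (A n)) l (𝓝 0) := by
  have hsum : Tendsto (fun n => ∑ s ∈ S, μ (B s n)) l (𝓝 0) := by
    simpa using tendsto_finsetSum S hB
  exact tendsto_of_tendsto_of_tendsto_of_le_of_le tendsto_const_nhds hsum (fun _ => zero_le)
    fun n => (measure_mono (hAB n)).trans (measure_biUnion_finset_le S _)

section PiCdf

variable {ι : Type*} (P : Measure (ι → ℝ))

lemma piCdf_nonneg (t : ι → ℝ) : 0 ≤ piCdf P t := measureReal_nonneg

lemma monotone_piCdf [IsFiniteMeasure P] : Monotone (piCdf P) :=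
  fun _ _ h => measureReal_mono (Iic_subset_Iic.2 h)

lemma piCdf_le_piCdf_inf_add [Finite ι] [IsProbabilityMeasure P] (t T : ι → ℝ) :
    piCdf P t ≤ piCdf P (t ⊓ T) + (1 - piCdf P T) := by
  rw [piCdf, piCdf, piCdf, ← probReal_compl_eq_one_sub measurableSet_Iic]
  refine (measureReal_mono fun x hx => ?_).trans (measureReal_union_le _ _)
  by_cases hxT : x ≤ T
  · exact Or.inl (le_inf hx hxT)
  · exact Or.inr hxT

lemma tendsto_piCdf_const_atTop [Finite ι] [IsProbabilityMeasure P] :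
    Tendsto (fun M : ℝ => piCdf P fun _ => M) atTop (𝓝 1) := by
  have hU : ⋃ M : ℝ, Iic (fun _ : ι => M) = univ :=
    eq_univ_of_forall fun x => mem_iUnion.2 (Finite.exists_le x)
  have h := tendsto_measure_iUnion_atTop (μ := P) fun a b hab => Iic_subset_Iic.2 fun _ => hab
  rw [hU, measure_univ] at h
  exact (ENNReal.tendsto_toReal ENNReal.one_ne_top).comp h

lemma tendsto_measureReal_eval_le_neg_atTop [IsFiniteMeasure P] (i : ι) :
    Tendsto (fun M : ℝ => P.real {x | x i ≤ -M}) atTop (𝓝 0) := by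
  have hI : ⋂ M : ℝ, {x : ι → ℝ | x i ≤ -M} = ∅ := eq_empty_of_forall_notMem fun x hx => by
    have := mem_iInter.1 hx (-x i + 1)
    simp only [mem_ofPred_eq] at this
    linarith
  have h := tendsto_measure_iInter_atTop (μ := P)
    (fun _ => (measurableSet_le (measurable_pi_apply i) measurable_const).nullMeasurableSet)
    (fun a b hab x hx => le_trans hx (neg_le_neg hab)) ⟨0, measure_ne_top _ _⟩
  rw [hI, measure_empty] at h
  exact (ENNReal.tendsto_toReal ENNReal.zero_ne_top).comp h

lemma exists_piCdf_tails_le [Finite ι] [DecidableEq ι] [IsProbabilityMeasure P] {δ : ℝ}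
    (hδ : 0 < δ) :
    ∃ M : ℝ, 1 - δ ≤ piCdf P (fun _ => M) ∧
      ∀ i, piCdf P (Function.update (fun _ => M) i (-M)) ≤ δ := by
  have hupper := (tendsto_piCdf_const_atTop P).eventually
    (eventually_ge_nhds (by linarith : 1 - δ < 1))
  have hlower : ∀ᶠ M in atTop, ∀ i, P.real {x | x i ≤ -M} ≤ δ := eventually_all.2 fun i =>
    (tendsto_measureReal_eval_le_neg_atTop P i).eventually (eventually_le_nhds hδ)
  obtain ⟨M, hM_upper, hM_lower⟩ := (hupper.and hlower).exists
  refine ⟨M, hM_upper, fun i => (measureReal_mono fun x hx => ?_).trans (hM_lower i)⟩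
  simpa using hx i

theorem exists_finset_forall_abs_piCdf_sub_le [Finite ι] [DecidableEq ι] [IsProbabilityMeasure P]
    (hP : Continuous (piCdf P)) {δ : ℝ} (hδ : 0 < δ) :
    ∃ S : Finset (ι → ℝ), ∀ (Q : Measure (ι → ℝ)) [IsProbabilityMeasure Q],
      (∀ s ∈ S, |piCdf Q s - piCdf P s| ≤ δ) → ∀ t, |piCdf Q t - piCdf P t| ≤ 4 * δ := by
  have := Fintype.ofFinite ι
  obtain ⟨M, hT, hcorner⟩ := exists_piCdf_tails_le P hδ
  set T : ι → ℝ := fun _ => M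
  obtain ⟨S₀, hS₀⟩ := (isCompact_Icc (a := -T) (b := T)).exists_finset_bracketing hP hδ
  refine ⟨insert T (S₀ ∪ Finset.univ.image fun i => Function.update T i (-M)),
    fun Q _ hQ t => ?_⟩
  have hQT := abs_le.1 (hQ T (Finset.mem_insert_self _ _))
  have hQS₀ : ∀ s ∈ S₀, |piCdf Q s - piCdf P s| ≤ δ := fun s hs =>
    hQ s (Finset.mem_insert_of_mem (Finset.mem_union_left _ hs))
  have hinner : |piCdf Q (t ⊓ T) - piCdf P (t ⊓ T)| ≤ δ + δ := by
    by_cases hcube : t ⊓ T ∈ Icc (-T) T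
    · obtain ⟨l, hl, v, hv, hlu, huv, hlv⟩ := hS₀ _ hcube
      exact abs_sub_le_of_monotone_of_bracket (monotone_piCdf P) (monotone_piCdf Q) hlu huv
        (hQS₀ l hl) (hQS₀ v hv) hlv.le
    · -- `t ⊓ T` lies below a corner, where both distribution functions are small
      obtain ⟨i, hi⟩ : ∃ i, ¬(-T) i ≤ (t ⊓ T) i :=
        not_forall.1 fun h => hcube ⟨h, inf_le_right⟩
      have hle : t ⊓ T ≤ Function.update T i (-M) := fun j => by
        rcases eq_or_ne j i with rfl | hj
        · rw [Function.update_self]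
          exact (not_le.1 hi).le
        · rw [Function.update_of_ne hj]
          exact (inf_le_right : t ⊓ T ≤ T) j
      have hQs := abs_le.1 (hQ _ (Finset.mem_insert_of_mem (Finset.mem_union_right _
        (Finset.mem_image_of_mem _ (Finset.mem_univ i)))))
      refine abs_sub_le_of_nonneg_of_le (piCdf_nonneg Q _) ?_ (piCdf_nonneg P _) ?_
      · linarith [monotone_piCdf Q hle, hcorner i]
      · linarith [monotone_piCdf P hle, hcorner i]
  have hQ_tail := piCdf_le_piCdf_inf_add Q t T
  have hP_tail := piCdf_le_piCdf_inf_add P t T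
  have hQ_inf := monotone_piCdf Q (inf_le_left : t ⊓ T ≤ t)
  have hP_inf := monotone_piCdf P (inf_le_left : t ⊓ T ≤ t)
  rw [abs_le] at hinner ⊢
  constructor <;> linarith [hinner.1, hinner.2, hQT.1, hQT.2]

end PiCdf

theorem polya_uniform_convergence_in_probability_general
    {Ω : Type*} [MeasurableSpace Ω] (μ : Measure Ω)
    {R : ℕ} (ν : ℕ → Ω → Measure (Fin R → ℝ))
    (hν : ∀ n ω, IsProbabilityMeasure (ν n ω))
    (P₀ : Measure (Fin R → ℝ)) [IsProbabilityMeasure P₀]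
    (hcont : Continuous fun t : Fin R → ℝ => (P₀ (Set.Iic t)).toReal)
    (hpt : ∀ t : Fin R → ℝ, ∀ ε : ℝ, 0 < ε →
      Tendsto (fun n =>
        μ {ω | ε ≤ |(ν n ω (Set.Iic t)).toReal - (P₀ (Set.Iic t)).toReal|}) atTop (nhds 0)) :
    ∀ ε : ℝ, 0 < ε →
      Tendsto (fun n =>
        μ {ω | ε ≤ ⨆ t : Fin R → ℝ,
          |(ν n ω (Set.Iic t)).toReal - (P₀ (Set.Iic t)).toReal|}) atTop (nhds 0) := by
  intro ε hε
  obtain ⟨S, hS⟩ := exists_finset_forall_abs_piCdf_sub_le P₀ hcont (δ := ε / 8) (by positivity)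
  refine tendsto_measure_zero_of_subset_biUnion S (fun n ω hω => ?_)
    fun s _ => hpt s (ε / 8) (by positivity)
  by_contra hω_notMem
  simp only [mem_iUnion, mem_ofPred_eq, not_exists, not_le] at hω_notMem
  have := hν n ω
  have hsup : ε ≤ 4 * (ε / 8) :=
    hω.trans (Real.iSup_le (hS (ν n ω) fun s hs => (hω_notMem s hs).le) (by positivity))
  linarith

/-- Multivariate Pólya theorem in probability: if the random distribution
functions `t ↦ ν_n(ω)(Iic t)` converge in probability pointwise to the continuous distribution
function `t ↦ P₀(Iic t)` of a probability measure `P₀` on `ℝ^R`, then the convergence is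
uniform in probability. -/
theorem polya_uniform_convergence_in_probability
    {Ω : Type*} [MeasurableSpace Ω] (μ : Measure Ω) [IsProbabilityMeasure μ]
    {R : ℕ} (ν : ℕ → Ω → Measure (Fin R → ℝ))
    (hν : ∀ n ω, IsProbabilityMeasure (ν n ω))
    (P₀ : Measure (Fin R → ℝ)) [IsProbabilityMeasure P₀]
    (hcont : Continuous fun t : Fin R → ℝ => (P₀ (Set.Iic t)).toReal)
    (hpt : ∀ t : Fin R → ℝ, ∀ ε : ℝ, 0 < ε →
      Tendsto (fun n =>
        μ {ω | ε ≤ |(ν n ω (Set.Iic t)).toReal - (P₀ (Set.Iic t)).toReal|}) atTop (nhds 0)) :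
    ∀ ε : ℝ, 0 < ε →
      Tendsto (fun n =>
        μ {ω | ε ≤ ⨆ t : Fin R → ℝ,
          |(ν n ω (Set.Iic t)).toReal - (P₀ (Set.Iic t)).toReal|}) atTop (nhds 0) :=
  polya_uniform_convergence_in_probability_general μ ν hν P₀ hcont hpt
end
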